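/- For every real p with 1/2 ≤ p < 1 and every s with 1/p ≤ s < 2, there exist a dimension n and n×n complex matrices K₁, K₂ such that the functional Ψ(A) := Tr |K₁ A^p K₂|^s is not convex on the set of positive definite n×n complex matrices; i.e., there exist positive definite A₁, A₂ and λ ∈ [0,1] with Ψ(λA₁+(1−λ)A₂) > λΨ(A₁) + (1−λ)Ψ(A₂). -/

import Mathlib

/-!
Take `K₁ = K₂ = E₀₀`, the first diagonal matrix unit, so that `Ψ(A) = |(A^p)₀₀|^s`.
The bisymmetric matrices `[[a, ±b], [±b, a]]` both satisfy `(A - (a+b))(A - (a-b)) = 0`, so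
`A^p` is the affine function of `A` interpolating `x^p` at `a ± b`; hence
`(A^p)₀₀ = ((a+b)^p + (a-b)^p) / 2`. Their midpoint is `a • 1`, with `(a^p • 1)₀₀ = a^p`, which
is strictly larger by strict concavity of `x ↦ x^p`; since `x ↦ x^s` is increasing, `Ψ` is
strictly larger at the midpoint than the average of its values.
-/

open Matrix
open scoped ComplexOrder

/-- Real power of a Hermitian matrix, defined via the spectral decomposition
(and `0` for non-Hermitian matrices). -/
noncomputable def mpow {n : Type*} [Fintype n] [DecidableEq n]
    (M : Matrix n n ℂ) (t : ℝ) : Matrix n n ℂ :=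
  if h : M.IsHermitian then
    (h.eigenvectorUnitary : Matrix n n ℂ) *
      Matrix.diagonal (fun i => ((h.eigenvalues i ^ t : ℝ) : ℂ)) *
      (star (h.eigenvectorUnitary : Matrix n n ℂ))
  else 0

/-- `Tr |X|^s := Tr ((X^* X)^{s/2})`. -/
noncomputable def trPow {n : Type*} [Fintype n] [DecidableEq n]
    (X : Matrix n n ℂ) (s : ℝ) : ℝ :=
  (mpow (Xᴴ * X) (s / 2)).trace.re

lemma spectrum_subset_pair_of_sub_mul_sub_eq_zero {A : Type*} [Ring A] [StarRing A]
    [TopologicalSpace A] [Algebra ℝ A] [ContinuousFunctionalCalculus ℝ A IsSelfAdjoint] {x : A}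
    (hx : IsSelfAdjoint x) {a b : ℝ}
    (h : (x - algebraMap ℝ A a) * (x - algebraMap ℝ A b) = 0) : spectrum ℝ x ⊆ {a, b} := by
  have hcfc : cfc (fun y : ℝ => (y - a) * (y - b)) x = cfc (fun _ : ℝ => (0 : ℝ)) x := by
    rw [cfc_mul (fun y : ℝ => y - a) (fun y : ℝ => y - b) x, cfc_sub _ _ x, cfc_sub _ _ x,
      cfc_id' ℝ x, cfc_const a x, cfc_const b x, cfc_const 0 x, map_zero, h]
  intro y hy
  have hy0 : (y - a) * (y - b) = 0 := (eqOn_of_cfc_eq_cfc hcfc (ha := hx)) hy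
  rcases mul_eq_zero.mp hy0 with h | h
  · exact Or.inl (sub_eq_zero.mp h)
  · exact Or.inr (sub_eq_zero.mp h)

section mpow

variable {n : Type*} [Fintype n] [DecidableEq n]

lemma mpow_eq_cfc {M : Matrix n n ℂ} (hM : M.IsHermitian) (t : ℝ) :
    mpow M t = cfc (fun x : ℝ => x ^ t) M := by
  rw [mpow, dif_pos hM, hM.cfc_eq, IsHermitian.cfc, Unitary.conjStarAlgAut_apply]
  rfl

lemma mpow_eq_of_sub_mul_sub_eq_zero {M : Matrix n n ℂ} (hM : M.IsHermitian) {a b c₀ c₁ t : ℝ}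
    (h : (M - algebraMap ℝ _ a) * (M - algebraMap ℝ _ b) = 0)
    (ha : c₀ + c₁ * a = a ^ t) (hb : c₀ + c₁ * b = b ^ t) :
    mpow M t = algebraMap ℝ _ c₀ + c₁ • M := by
  have hspec := spectrum_subset_pair_of_sub_mul_sub_eq_zero hM.isSelfAdjoint h
  rw [mpow_eq_cfc hM, cfc_congr (g := fun x => c₀ + c₁ * x), cfc_const_add c₀ (fun x => c₁ * x) M,
    cfc_const_mul_id c₁ M]
  rintro x hx
  rcases hspec hx with rfl | rfl
  · exact ha.symm
  · exact hb.symm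

lemma trPow_smul_of_isIdempotentElem {P : Matrix n n ℂ} (hP : P.IsHermitian)
    (hPP : IsIdempotentElem P) (z : ℂ) {s : ℝ} (hs : 0 < s) :
    trPow (z • P) s = ‖z‖ ^ s * P.trace.re := by
  set σ : ℝ := ‖z‖ ^ 2
  have hr : s / 2 ≠ 0 := by positivity
  have hzP : (z • P)ᴴ * (z • P) = σ • P := by
    rw [conjTranspose_smul, hP.eq, smul_mul_smul_comm, hPP.eq, RCLike.star_def,
      Complex.conj_mul', ← Complex.ofReal_pow, Complex.coe_smul]
  have hσP : (σ • P).IsHermitian := by simp [IsHermitian, hP.eq]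
  have hquad : (σ • P - algebraMap ℝ _ 0) * (σ • P - algebraMap ℝ _ σ) = 0 := by
    simp [Algebra.algebraMap_eq_smul_one, mul_sub, hPP.eq]
  have hσr : σ ^ (s / 2 - 1) * σ = σ ^ (s / 2) := by
    rcases eq_or_ne σ 0 with hσ | hσ
    · simp [hσ, Real.zero_rpow hr]
    · rw [Real.rpow_sub_one hσ, div_mul_cancel₀ _ hσ]
  have hmpow : mpow (σ • P) (s / 2) = algebraMap ℝ _ 0 + σ ^ (s / 2 - 1) • σ • P :=
    mpow_eq_of_sub_mul_sub_eq_zero hσP hquad (by simp [Real.zero_rpow hr])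
      (by rw [zero_add, hσr])
  have hσs : σ ^ (s / 2) = ‖z‖ ^ s := by
    rw [← Real.rpow_natCast_mul (norm_nonneg z)]
    congr 1
    push_cast
    ring
  rw [trPow, hzP, hmpow, map_zero, zero_add, smul_smul, hσr, hσs, trace_smul]
  simp

lemma trPow_single_mul_mul_single (B : Matrix n n ℂ) (i : n) {s : ℝ} (hs : 0 < s) :
    trPow (single i i 1 * B * single i i 1) s = ‖B i i‖ ^ s := by
  have hP : (single i i (1 : ℂ)).IsHermitian := by simp [IsHermitian]
  rw [single_mul_mul_single, one_mul, mul_one,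
    show single i i (B i i) = B i i • single i i 1 by simp,
    trPow_smul_of_isIdempotentElem hP (by simp [IsIdempotentElem]) _ hs, trace_single_eq_same,
    Complex.one_re, mul_one]

end mpow

lemma add_rpow_add_sub_rpow_lt {a b p : ℝ} (hb : |b| ≤ a) (hb₀ : b ≠ 0) (hp₀ : 0 < p)
    (hp₁ : p < 1) : ((a + b) ^ p + (a - b) ^ p) / 2 < a ^ p := by
  obtain ⟨hle, hge⟩ := abs_le.mp hb
  have h := (Real.strictConcaveOn_rpow hp₀ hp₁).2 (x := a + b) (y := a - b)
    (Set.mem_Ici.mpr (by linarith)) (Set.mem_Ici.mpr (by linarith))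
    (fun h => hb₀ (by linarith))
    (by norm_num : (0 : ℝ) < 1 / 2) (by norm_num : (0 : ℝ) < 1 / 2) (by norm_num)
  have hmid : 1 / 2 * (a + b) + 1 / 2 * (a - b) = a := by ring
  simp only [smul_eq_mul, hmid] at h
  linarith

noncomputable def bisymm (a b : ℝ) : Matrix (Fin 2) (Fin 2) ℂ := !![(a : ℂ), b; b, a]

section bisymm

variable (a b : ℝ)

lemma bisymm_isHermitian : (bisymm a b).IsHermitian := by
  ext i j
  fin_cases i <;> fin_cases j <;> simp [bisymm]

lemma bisymm_sub_mul_sub_eq_zero :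
    (bisymm a b - algebraMap ℝ _ (a + b)) * (bisymm a b - algebraMap ℝ _ (a - b)) = 0 := by
  ext i j
  fin_cases i <;> fin_cases j <;>
    simp [bisymm, Algebra.algebraMap_eq_smul_one, mul_apply, Fin.sum_univ_two]

lemma bisymm_posDef {a b : ℝ} (h : |b| < a) : (bisymm a b).PosDef := by
  have hspec := spectrum_subset_pair_of_sub_mul_sub_eq_zero (bisymm_isHermitian a b).isSelfAdjoint
    (bisymm_sub_mul_sub_eq_zero a b)
  refine (bisymm_isHermitian a b).posDef_iff_eigenvalues_pos.mpr fun i => ?_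
  obtain ⟨hlt, hgt⟩ := abs_lt.mp h
  rcases hspec ((bisymm_isHermitian a b).eigenvalues_mem_spectrum_real i) with h' | h' <;>
    rw [h'] <;> linarith

lemma mpow_bisymm_apply_zero_zero (t : ℝ) :
    mpow (bisymm a b) t 0 0 = (((a + b) ^ t + (a - b) ^ t) / 2 : ℝ) := by
  -- the slope of the chord; at `b = 0` division by zero makes it `0`, which still interpolates
  set c₁ := ((a + b) ^ t - (a - b) ^ t) / (2 * b)
  have hc₁ : c₁ * b = ((a + b) ^ t - (a - b) ^ t) / 2 := by
    rcases eq_or_ne b 0 with rfl | hb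
    · simp
    · rw [div_mul_eq_mul_div, mul_div_mul_right _ _ hb]
  rw [mpow_eq_of_sub_mul_sub_eq_zero (bisymm_isHermitian a b) (bisymm_sub_mul_sub_eq_zero a b)
    (c₀ := ((a + b) ^ t + (a - b) ^ t) / 2 - c₁ * a) (c₁ := c₁) (by linear_combination hc₁)
    (by linear_combination -hc₁)]
  simp [bisymm, Algebra.algebraMap_eq_smul_one]

lemma half_smul_bisymm_neg_add_half_smul_bisymm :
    ((1 / 2 : ℝ) : ℂ) • bisymm a (-b) + ((1 - 1 / 2 : ℝ) : ℂ) • bisymm a b = bisymm a 0 := by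
  ext i j
  fin_cases i <;> fin_cases j <;> simp [bisymm] <;> ring

end bisymm

theorem not_convex_trace_functional_general (p : ℝ) (hp : 1 / 2 ≤ p) (hp' : p < 1)
    (s : ℝ) (hs : 1 / p ≤ s) :
    ∃ (m : ℕ) (K₁ K₂ A₁ A₂ : Matrix (Fin m) (Fin m) ℂ) (l : ℝ),
      A₁.PosDef ∧ A₂.PosDef ∧ l ∈ Set.Icc (0 : ℝ) 1 ∧
      trPow (K₁ * mpow ((l : ℂ) • A₁ + ((1 - l : ℝ) : ℂ) • A₂) p * K₂) s
        > l * trPow (K₁ * mpow A₁ p * K₂) s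
          + (1 - l) * trPow (K₁ * mpow A₂ p * K₂) s := by
  have hp₀ : 0 < p := by linarith
  have hs₀ : 0 < s := lt_of_lt_of_le (by positivity) hs
  refine ⟨2, single 0 0 1, single 0 0 1, bisymm (5 / 2) (-(3 / 2)), bisymm (5 / 2) (3 / 2), 1 / 2,
    bisymm_posDef (by norm_num [abs_of_neg]), bisymm_posDef (by norm_num [abs_of_pos]),
    by norm_num, ?_⟩
  rw [half_smul_bisymm_neg_add_half_smul_bisymm]
  simp only [trPow_single_mul_mul_single _ _ hs₀, mpow_bisymm_apply_zero_zero, Complex.norm_real]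
  rw [← sub_eq_add_neg, sub_neg_eq_add, add_comm ((5 / 2 - 3 / 2 : ℝ) ^ p), add_zero, sub_zero,
    add_self_div_two]
  have hv : 0 < ((5 / 2 + 3 / 2 : ℝ) ^ p + (5 / 2 - 3 / 2) ^ p) / 2 := by positivity
  have hlt := add_rpow_add_sub_rpow_lt (a := 5 / 2) (b := 3 / 2) (by norm_num [abs_of_pos])
    (by norm_num) hp₀ hp'
  rw [Real.norm_of_nonneg hv.le, Real.norm_of_nonneg (by positivity)]
  linarith [Real.rpow_lt_rpow hv.le hlt hs₀]

theorem not_convex_trace_functional (p : ℝ) (hp : 1 / 2 ≤ p) (hp' : p < 1)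
    (s : ℝ) (hs : 1 / p ≤ s) (hs' : s < 2) :
    ∃ (m : ℕ) (K₁ K₂ A₁ A₂ : Matrix (Fin m) (Fin m) ℂ) (l : ℝ),
      A₁.PosDef ∧ A₂.PosDef ∧ l ∈ Set.Icc (0 : ℝ) 1 ∧
      trPow (K₁ * mpow ((l : ℂ) • A₁ + ((1 - l : ℝ) : ℂ) • A₂) p * K₂) s
        > l * trPow (K₁ * mpow A₁ p * K₂) s
          + (1 - l) * trPow (K₁ * mpow A₂ p * K₂) s :=
  not_convex_trace_functional_general p hp hp' s hs
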